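/- (Existence of the representation η'₂.) For every n ≥ 2 and every f, w, y, v ∈ ℂ with f ≠ 0, v ≠ 0, and w² − f²·y² ≠ 0, there exists a group homomorphism ρ : VST_n → GL_n(ℂ) such that for all 1 ≤ i ≤ n−1: ρ(s_i) = L_i(!![0, f; f⁻¹, 0]), ρ(τ_i) = L_i(!![w, f²·y; y, w]), and ρ(ν_i) = L_i(!![0, v; v⁻¹, 0]). (In particular these matrices are invertible and satisfy all the defining relations of VST_n.) -/

import Mathlib

/-- Generator type for the virtual singular twin group `VST_n`:
three copies of `Fin (n-1)`, for the generators `s_i`, `τ_i`, `ν_i`. -/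
abbrev VSTGen (n : ℕ) := Fin (n - 1) ⊕ Fin (n - 1) ⊕ Fin (n - 1)

def vstS (n : ℕ) (i : Fin (n - 1)) : FreeGroup (VSTGen n) := FreeGroup.of (Sum.inl i)
def vstT (n : ℕ) (i : Fin (n - 1)) : FreeGroup (VSTGen n) := FreeGroup.of (Sum.inr (Sum.inl i))
def vstN (n : ℕ) (i : Fin (n - 1)) : FreeGroup (VSTGen n) := FreeGroup.of (Sum.inr (Sum.inr i))

def vstAdj {n : ℕ} (i j : Fin (n - 1)) : Prop := i.val + 1 = j.val ∨ j.val + 1 = i.val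
def vstFar {n : ℕ} (i j : Fin (n - 1)) : Prop := i.val + 2 ≤ j.val ∨ j.val + 2 ≤ i.val

/-- The defining relations of the virtual singular twin group `VST_n`. -/
def vstRels (n : ℕ) : Set (FreeGroup (VSTGen n)) :=
  {r | (∃ i, r = vstS n i * vstS n i) ∨
       (∃ i, r = vstN n i * vstN n i) ∨
       (∃ i, r = vstT n i * vstS n i * (vstS n i * vstT n i)⁻¹) ∨
       (∃ i j, vstAdj i j ∧
          r = vstS n i * vstS n j * vstT n i * (vstT n j * vstS n i * vstS n j)⁻¹) ∨
       (∃ i j, vstAdj i j ∧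
          r = vstN n i * vstN n j * vstN n i * (vstN n j * vstN n i * vstN n j)⁻¹) ∨
       (∃ i j, vstAdj i j ∧
          r = vstN n i * vstS n j * vstN n i * (vstN n j * vstS n i * vstN n j)⁻¹) ∨
       (∃ i j, vstAdj i j ∧
          r = vstN n i * vstT n j * vstN n i * (vstN n j * vstT n i * vstN n j)⁻¹) ∨
       (∃ i j, vstFar i j ∧
          ∃ g ∈ ({vstS n, vstT n, vstN n} : Set (Fin (n - 1) → FreeGroup (VSTGen n))),
          ∃ h ∈ ({vstS n, vstT n, vstN n} : Set (Fin (n - 1) → FreeGroup (VSTGen n))),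
            r = g i * h j * (h j * g i)⁻¹)}

/-- The virtual singular twin group `VST_n`. -/
abbrev VST (n : ℕ) := PresentedGroup (vstRels n)

/-- `Lmat n i M` is the `n × n` matrix agreeing with the identity outside rows and
columns `i, i+1` (0-indexed), with `2 × 2` block `M` there. -/
def Lmat {R : Type*} [Zero R] [One R] (n : ℕ) (i : ℕ) (M : Matrix (Fin 2) (Fin 2) R) :
    Matrix (Fin n) (Fin n) R :=
  Matrix.of fun a b =>
    if a.val = i ∧ b.val = i then M 0 0
    else if a.val = i ∧ b.val = i + 1 then M 0 1
    else if a.val = i + 1 ∧ b.val = i then M 1 0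
    else if a.val = i + 1 ∧ b.val = i + 1 then M 1 1
    else if a.val = b.val then 1 else 0

/-!
`L_i(M)` is `1 + Eᵀ (M - 1) E` for the `0/1` matrix `E` of the inclusion of `{i, i+1}`, and
`E Eᵀ = 1`; so `M ↦ L_i(M)` is a monoid homomorphism, which gives invertibility and the relations
between generators with the same index. Blocks at distance at least two have disjoint supports
and commute. For adjacent indices, `L_i` and `L_{i+1}` both factor through the embedding of
`3 × 3` matrices at position `i`, so the remaining relations reduce to identities between
`3 × 3` matrices. These hold with an arbitrary `2 × 2` matrix in place of `τ`: the shape of `τ`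
is used only for `τ s = s τ` and for `det τ = w² - f² y²`.
-/

namespace Matrix

variable {ι κ μ R : Type*} [Ring R]

/-- `M` acting on the coordinates `Set.range e` and the identity on the others;
`(1 : Matrix κ κ R).submatrix e id` is the `0/1` matrix of `e`. -/
def extendByOne [Fintype ι] [DecidableEq ι] [DecidableEq κ] (e : ι ↪ κ) (M : Matrix ι ι R) :
    Matrix κ κ R :=
  1 + (1 : Matrix κ κ R).submatrix id e * (M - 1) * (1 : Matrix κ κ R).submatrix e id

lemma one_submatrix_mul_one_submatrix [Fintype κ] [DecidableEq ι] [DecidableEq κ] (e : ι ↪ κ) :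
    (1 : Matrix κ κ R).submatrix e id * (1 : Matrix κ κ R).submatrix id e = 1 := by
  rw [← submatrix_mul _ _ _ _ _ Function.bijective_id, Matrix.one_mul, submatrix_one_embedding]

lemma one_submatrix_mul_one_submatrix_of_disjoint [Fintype κ] [DecidableEq κ] {e₁ : ι ↪ κ}
    {e₂ : μ ↪ κ} (h : Disjoint (Set.range e₁) (Set.range e₂)) :
    (1 : Matrix κ κ R).submatrix e₁ id * (1 : Matrix κ κ R).submatrix id e₂ = 0 := by
  rw [← submatrix_mul _ _ _ _ _ Function.bijective_id, Matrix.one_mul]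
  ext p q
  exact one_apply_ne (Set.disjoint_range_iff.mp h p q)

lemma extendByOne_one [Fintype ι] [DecidableEq ι] [DecidableEq κ] (e : ι ↪ κ) :
    extendByOne e (1 : Matrix ι ι R) = 1 := by
  simp [extendByOne]

section

variable [Fintype ι] [Fintype κ] [DecidableEq ι] [DecidableEq κ]

lemma extendByOne_mul (e : ι ↪ κ) (M N : Matrix ι ι R) :
    extendByOne e (M * N) = extendByOne e M * extendByOne e N := by
  have hMN : M * N - 1 = (M - 1) + (N - 1) + (M - 1) * (N - 1) := by noncomm_ring
  simp only [extendByOne, hMN]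
  set E : Matrix ι κ R := (1 : Matrix κ κ R).submatrix e id
  set F : Matrix κ ι R := (1 : Matrix κ κ R).submatrix id e
  have hEF : E * F = 1 := one_submatrix_mul_one_submatrix e
  calc 1 + F * ((M - 1) + (N - 1) + (M - 1) * (N - 1)) * E
      = 1 + F * (M - 1) * E + F * (N - 1) * E + F * (M - 1) * (E * F) * (N - 1) * E := by
        simp only [hEF, Matrix.mul_add, Matrix.add_mul, Matrix.mul_one, Matrix.mul_assoc,
          add_assoc]
    _ = (1 + F * (M - 1) * E) * (1 + F * (N - 1) * E) := by
        simp only [Matrix.mul_add, Matrix.add_mul, Matrix.mul_one, Matrix.one_mul,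
          Matrix.mul_assoc, add_assoc]

def extendByOneHom (e : ι ↪ κ) : Matrix ι ι R →* Matrix κ κ R where
  toFun := extendByOne e
  map_one' := extendByOne_one e
  map_mul' := extendByOne_mul e

lemma extendByOne_extendByOne [DecidableEq μ] (e₁ : ι ↪ κ) (e₂ : κ ↪ μ) (M : Matrix ι ι R) :
    extendByOne e₂ (extendByOne e₁ M) = extendByOne (e₁.trans e₂) M := by
  have h₁ : (1 : Matrix κ κ R).submatrix e₁ id * (1 : Matrix μ μ R).submatrix e₂ id
      = (1 : Matrix μ μ R).submatrix (e₁.trans e₂) id := by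
    have h := submatrix_mul (1 : Matrix κ κ R) ((1 : Matrix μ μ R).submatrix e₂ id) e₁ id id
      Function.bijective_id
    rw [Matrix.one_mul, submatrix_id_id] at h
    rw [← h]; rfl
  have h₂ : (1 : Matrix μ μ R).submatrix id e₂ * (1 : Matrix κ κ R).submatrix id e₁
      = (1 : Matrix μ μ R).submatrix id (e₁.trans e₂) := by
    ext a p; simp [mul_apply, one_apply]
  simp only [extendByOne, add_sub_cancel_left, ← h₁, ← h₂, Matrix.mul_assoc]

lemma commute_extendByOne [Fintype μ] [DecidableEq μ] {e₁ : ι ↪ κ} {e₂ : μ ↪ κ}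
    (h : Disjoint (Set.range e₁) (Set.range e₂)) (M : Matrix ι ι R) (N : Matrix μ μ R) :
    Commute (extendByOne e₁ M) (extendByOne e₂ N) := by
  have h₁₂ := one_submatrix_mul_one_submatrix_of_disjoint (R := R) h
  have h₂₁ := one_submatrix_mul_one_submatrix_of_disjoint (R := R) h.symm
  simp only [Commute, SemiconjBy, extendByOne, Matrix.mul_add, Matrix.add_mul, Matrix.mul_one,
    Matrix.one_mul, Matrix.mul_assoc]
  rw [← Matrix.mul_assoc _ ((1 : Matrix κ κ R).submatrix id e₂), h₁₂,
    ← Matrix.mul_assoc _ ((1 : Matrix κ κ R).submatrix id e₁), h₂₁]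
  simp only [Matrix.zero_mul, Matrix.mul_zero, add_zero]
  abel

end

end Matrix

def Fin.blockEmb {k n : ℕ} (i : ℕ) (h : i + k ≤ n) : Fin k ↪ Fin n :=
  (Fin.natAddEmb i).trans (Fin.castLEEmb h)

@[simp] lemma Fin.val_blockEmb {k n i : ℕ} (h : i + k ≤ n) (p : Fin k) :
    (Fin.blockEmb i h p : ℕ) = i + p := rfl

lemma Fin.blockEmb_trans {k m n i j : ℕ} (hj : j + k ≤ m) (hi : i + m ≤ n) :
    (Fin.blockEmb j hj).trans (Fin.blockEmb i hi) = Fin.blockEmb (i + j) (by omega) := by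
  ext p; simp [add_assoc]

lemma Fin.val_add_two_le {n : ℕ} (i : Fin (n - 1)) : (i : ℕ) + 2 ≤ n := by
  have := i.isLt; omega

section Lmat

lemma Lmat_three_zero {R : Type*} [Zero R] [One R] (M : Matrix (Fin 2) (Fin 2) R) :
    Lmat 3 0 M = !![M 0 0, M 0 1, 0; M 1 0, M 1 1, 0; 0, 0, 1] := by
  ext a b; fin_cases a <;> fin_cases b <;> rfl

lemma Lmat_three_one {R : Type*} [Zero R] [One R] (M : Matrix (Fin 2) (Fin 2) R) :
    Lmat 3 1 M = !![1, 0, 0; 0, M 0 0, M 0 1; 0, M 1 0, M 1 1] := by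
  ext a b; fin_cases a <;> fin_cases b <;> rfl

variable {R : Type*} [Ring R] {n i : ℕ}

lemma Lmat_eq_extendByOne (h : i + 2 ≤ n) (M : Matrix (Fin 2) (Fin 2) R) :
    Lmat n i M = Matrix.extendByOne (Fin.blockEmb i h) M := by
  ext a b
  simp only [Lmat, Matrix.extendByOne, Matrix.of_apply, Matrix.add_apply, Matrix.sub_apply,
    Matrix.mul_apply, Matrix.submatrix_apply, Matrix.one_apply, Fin.sum_univ_two, Fin.ext_iff,
    Fin.val_blockEmb, id, Fin.val_zero, Fin.val_one, add_zero, ite_mul, mul_ite, one_mul, mul_one,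
    zero_mul, mul_zero]
  split_ifs <;> first | omega | contradiction | abel

lemma Lmat_one (h : i + 2 ≤ n) : Lmat n i (1 : Matrix (Fin 2) (Fin 2) R) = 1 := by
  rw [Lmat_eq_extendByOne h, Matrix.extendByOne_one]

lemma Lmat_mul (h : i + 2 ≤ n) (M N : Matrix (Fin 2) (Fin 2) R) :
    Lmat n i (M * N) = Lmat n i M * Lmat n i N := by
  simp only [Lmat_eq_extendByOne h, Matrix.extendByOne_mul]

lemma isUnit_Lmat (h : i + 2 ≤ n) {M : Matrix (Fin 2) (Fin 2) R} (hM : IsUnit M) :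
    IsUnit (Lmat n i M) := by
  rw [Lmat_eq_extendByOne h]
  exact hM.map (Matrix.extendByOneHom _)

lemma Lmat_commute_of_vstFar {i j : Fin (n - 1)} (hij : vstFar i j)
    (M N : Matrix (Fin 2) (Fin 2) R) : Commute (Lmat n i M) (Lmat n j N) := by
  rw [Lmat_eq_extendByOne i.val_add_two_le, Lmat_eq_extendByOne j.val_add_two_le]
  refine Matrix.commute_extendByOne (Set.disjoint_range_iff.mpr fun p q hpq => ?_) M N
  have := congrArg Fin.val hpq
  simp only [Fin.val_blockEmb] at this
  unfold vstFar at hij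
  omega

lemma Lmat_add_eq_extendByOne_Lmat_three (hi : i + 3 ≤ n) {j : ℕ} (hj : j + 2 ≤ 3)
    (M : Matrix (Fin 2) (Fin 2) R) :
    Lmat n (i + j) M = Matrix.extendByOne (Fin.blockEmb i hi) (Lmat 3 j M) := by
  rw [Lmat_eq_extendByOne hj, Matrix.extendByOne_extendByOne, Fin.blockEmb_trans,
    Lmat_eq_extendByOne]

lemma Lmat_triple_of_Lmat_three (hi : i + 3 ≤ n) {j k : ℕ} (hj : j + 2 ≤ 3) (hk : k + 2 ≤ 3)
    {A B C D E F : Matrix (Fin 2) (Fin 2) R}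
    (h : Lmat 3 j A * Lmat 3 k B * Lmat 3 j C = Lmat 3 k D * Lmat 3 j E * Lmat 3 k F) :
    Lmat n (i + j) A * Lmat n (i + k) B * Lmat n (i + j) C
      = Lmat n (i + k) D * Lmat n (i + j) E * Lmat n (i + k) F := by
  simp only [Lmat_add_eq_extendByOne_Lmat_three hi hj, Lmat_add_eq_extendByOne_Lmat_three hi hk,
    ← Matrix.extendByOne_mul, h]

lemma Lmat_triple_of_vstAdj {i j : Fin (n - 1)} (hij : vstAdj i j)
    {A B C D E F : Matrix (Fin 2) (Fin 2) R}
    (h₀₁ : Lmat 3 0 A * Lmat 3 1 B * Lmat 3 0 C = Lmat 3 1 D * Lmat 3 0 E * Lmat 3 1 F)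
    (h₁₀ : Lmat 3 1 A * Lmat 3 0 B * Lmat 3 1 C = Lmat 3 0 D * Lmat 3 1 E * Lmat 3 0 F) :
    Lmat n i A * Lmat n j B * Lmat n i C = Lmat n j D * Lmat n i E * Lmat n j F := by
  rcases hij with hij | hij
  · have h := Lmat_triple_of_Lmat_three (n := n) (i := i) (by have := j.isLt; omega) (by norm_num)
      (by norm_num) h₀₁
    rwa [add_zero, hij] at h
  · have h := Lmat_triple_of_Lmat_three (n := n) (i := j) (by have := i.isLt; omega) (by norm_num)
      (by norm_num) h₁₀
    rwa [add_zero, hij] at h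

end Lmat

section Eta2

variable {K : Type*} [Field K]

def sMat (a : K) : Matrix (Fin 2) (Fin 2) K := !![0, a; a⁻¹, 0]

def tMat (f w y : K) : Matrix (Fin 2) (Fin 2) K := !![w, f ^ 2 * y; y, w]

lemma sMat_mul_self {a : K} (ha : a ≠ 0) : sMat a * sMat a = 1 := by
  simp [sMat, Matrix.one_fin_two, ha]

lemma tMat_mul_sMat {f : K} (hf : f ≠ 0) (w y : K) :
    tMat f w y * sMat f = sMat f * tMat f w y := by
  simp [tMat, sMat, hf, pow_two, mul_comm, mul_assoc]

lemma det_tMat (f w y : K) : (tMat f w y).det = w ^ 2 - f ^ 2 * y ^ 2 := by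
  rw [tMat, Matrix.det_fin_two_of]; ring

lemma Lmat_three_sMat_mul_sMat_mul_zero_one (a : K) (X : Matrix (Fin 2) (Fin 2) K) :
    Lmat 3 0 (sMat a) * Lmat 3 1 (sMat a) * Lmat 3 0 X
      = Lmat 3 1 X * Lmat 3 0 (sMat a) * Lmat 3 1 (sMat a) := by
  simp only [Lmat_three_zero, Lmat_three_one, sMat, Matrix.mul_fin_three]
  simp [mul_comm]

lemma Lmat_three_sMat_mul_sMat_mul_one_zero (a : K) (X : Matrix (Fin 2) (Fin 2) K) :
    Lmat 3 1 (sMat a) * Lmat 3 0 (sMat a) * Lmat 3 1 X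
      = Lmat 3 0 X * Lmat 3 1 (sMat a) * Lmat 3 0 (sMat a) := by
  simp only [Lmat_three_zero, Lmat_three_one, sMat, Matrix.mul_fin_three]
  simp [mul_comm]

lemma Lmat_three_sMat_mul_mul_sMat {a : K} (ha : a ≠ 0) (X : Matrix (Fin 2) (Fin 2) K) :
    Lmat 3 0 (sMat a) * Lmat 3 1 X * Lmat 3 0 (sMat a)
      = Lmat 3 1 (sMat a) * Lmat 3 0 X * Lmat 3 1 (sMat a) := by
  simp only [Lmat_three_zero, Lmat_three_one, sMat, Matrix.mul_fin_three]
  simp [ha, mul_comm]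

def eta2Mat (n : ℕ) (f w y v : K) : VSTGen n → Matrix (Fin n) (Fin n) K :=
  Sum.elim (fun i => Lmat n i (sMat f))
    (Sum.elim (fun i => Lmat n i (tMat f w y)) (fun i => Lmat n i (sMat v)))

variable {n : ℕ} {f w y v : K}

lemma isUnit_eta2Mat (hf : f ≠ 0) (hv : v ≠ 0) (hdet : w ^ 2 - f ^ 2 * y ^ 2 ≠ 0)
    (g : VSTGen n) : IsUnit (eta2Mat n f w y v g) := by
  rcases g with i | i | i
  · exact isUnit_Lmat i.val_add_two_le (IsUnit.of_mul_eq_one _ (sMat_mul_self hf))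
  · refine isUnit_Lmat i.val_add_two_le ((Matrix.isUnit_iff_isUnit_det _).mpr ?_)
    rw [det_tMat]
    exact hdet.isUnit
  · exact isUnit_Lmat i.val_add_two_le (IsUnit.of_mul_eq_one _ (sMat_mul_self hv))

lemma lift_eta2Mat_unit_eq_one (hf : f ≠ 0) (hv : v ≠ 0)
    (hdet : w ^ 2 - f ^ 2 * y ^ 2 ≠ 0) :
    ∀ r ∈ vstRels n, FreeGroup.lift (fun g => (isUnit_eta2Mat hf hv hdet g).unit) r = 1 := by
  have hν := Lmat_three_sMat_mul_mul_sMat hv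
  rintro r (⟨i, rfl⟩ | ⟨i, rfl⟩ | ⟨i, rfl⟩ | ⟨i, j, hij, rfl⟩ | ⟨i, j, hij, rfl⟩ |
    ⟨i, j, hij, rfl⟩ | ⟨i, j, hij, rfl⟩ | ⟨i, j, hij, g, hg, h, hh, rfl⟩)
  all_goals simp only [vstS, vstT, vstN, map_mul, map_inv, FreeGroup.lift_apply_of,
    mul_inv_eq_one, Units.ext_iff, Units.val_mul, Units.val_one, IsUnit.unit_spec, eta2Mat,
    Sum.elim_inl, Sum.elim_inr]
  · rw [← Lmat_mul i.val_add_two_le, sMat_mul_self hf, Lmat_one i.val_add_two_le]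
  · rw [← Lmat_mul i.val_add_two_le, sMat_mul_self hv, Lmat_one i.val_add_two_le]
  · rw [← Lmat_mul i.val_add_two_le, ← Lmat_mul i.val_add_two_le, tMat_mul_sMat hf]
  · exact Lmat_triple_of_vstAdj hij (Lmat_three_sMat_mul_sMat_mul_zero_one f _)
      (Lmat_three_sMat_mul_sMat_mul_one_zero f _)
  · exact Lmat_triple_of_vstAdj hij (hν _) (hν _).symm
  · exact Lmat_triple_of_vstAdj hij (hν _) (hν _).symm
  · exact Lmat_triple_of_vstAdj hij (hν _) (hν _).symm
  · simp only [Set.mem_insert_iff, Set.mem_singleton_iff] at hg hh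
    obtain rfl | rfl | rfl := hg <;> obtain rfl | rfl | rfl := hh <;>
      simp only [vstS, vstT, vstN, FreeGroup.lift_apply_of, IsUnit.unit_spec, Sum.elim_inl,
        Sum.elim_inr] <;>
      exact Lmat_commute_of_vstFar hij _ _

end Eta2

theorem exists_eta2_prime_representation_general (n : ℕ) (f w y v : ℂ)
    (hf : f ≠ 0) (hv : v ≠ 0) (hdet : w ^ 2 - f ^ 2 * y ^ 2 ≠ 0) :
    ∃ ρ : VST n →* Matrix.GeneralLinearGroup (Fin n) ℂ,
      ∀ i : Fin (n - 1),
        ((ρ (PresentedGroup.of (Sum.inl i)) : Matrix (Fin n) (Fin n) ℂ))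
          = Lmat n i.val !![0, f; f⁻¹, 0] ∧
        ((ρ (PresentedGroup.of (Sum.inr (Sum.inl i))) : Matrix (Fin n) (Fin n) ℂ))
          = Lmat n i.val !![w, f ^ 2 * y; y, w] ∧
        ((ρ (PresentedGroup.of (Sum.inr (Sum.inr i))) : Matrix (Fin n) (Fin n) ℂ))
          = Lmat n i.val !![0, v; v⁻¹, 0] := by
  refine ⟨PresentedGroup.toGroup (lift_eta2Mat_unit_eq_one hf hv hdet), fun i => ?_⟩
  simp only [PresentedGroup.toGroup.of, IsUnit.unit_spec]
  exact ⟨rfl, rfl, rfl⟩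

/-- Existence of the representation `η'₂` of `VST_n`:
`s_i ↦ L_i(!![0, f; f⁻¹, 0])`, `τ_i ↦ L_i(!![w, f²y; y, w])`,
`ν_i ↦ L_i(!![0, v; v⁻¹, 0])`. -/
theorem exists_eta2_prime_representation (n : ℕ) (hn : 2 ≤ n) (f w y v : ℂ)
    (hf : f ≠ 0) (hv : v ≠ 0) (hdet : w ^ 2 - f ^ 2 * y ^ 2 ≠ 0) :
    ∃ ρ : VST n →* Matrix.GeneralLinearGroup (Fin n) ℂ,
      ∀ i : Fin (n - 1),
        ((ρ (PresentedGroup.of (Sum.inl i)) : Matrix (Fin n) (Fin n) ℂ))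
          = Lmat n i.val !![0, f; f⁻¹, 0] ∧
        ((ρ (PresentedGroup.of (Sum.inr (Sum.inl i))) : Matrix (Fin n) (Fin n) ℂ))
          = Lmat n i.val !![w, f ^ 2 * y; y, w] ∧
        ((ρ (PresentedGroup.of (Sum.inr (Sum.inr i))) : Matrix (Fin n) (Fin n) ℂ))
          = Lmat n i.val !![0, v; v⁻¹, 0] :=
  exists_eta2_prime_representation_general n f w y v hf hv hdet
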